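/- arXiv:0804.1095 — 2 statements merged into one kernel-verified Lean document; each statement's English description precedes it below -/
import Mathlib

section
/- If D is a distribution on a graph G and t is a vertex with wt_t(D) < 1, then t is not reachable from D by any finite sequence of pegging moves. -/
open SimpleGraph Finset

variable {V : Type*} {W : Type*}

/-- A pegging move: remove pegs from adjacent pegged vertices `u, v`,
place a peg on an empty vertex `w` adjacent to `v`. -/
def PegMove {V : Type*} (G : SimpleGraph V) [DecidableEq V] (D D' : Finset V) : Prop :=
  ∃ u v w : V, G.Adj u v ∧ G.Adj v w ∧ u ∈ D ∧ v ∈ D ∧ w ∉ D ∧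
    D' = insert w ((D.erase u).erase v)

/-- The reach of a distribution: all vertices reachable by a finite
sequence of pegging moves. -/
def PegReach {V : Type*} (G : SimpleGraph V) [DecidableEq V] (D : Finset V) : Set V :=
  {t | ∃ D' : Finset V, Relation.ReflTransGen (PegMove G) D D' ∧ t ∈ D'}

/-- The pegging number: least positive `k` such that every distribution of
`k` pegs has full reach. -/
noncomputable def PeggingNumber {V : Type*} (G : SimpleGraph V) [DecidableEq V] : ℕ :=
  sInf {k | 0 < k ∧ ∀ D : Finset V, D.card = k → PegReach G D = Set.univ}

/-- The optimal pegging number: least positive `k` such that some distribution of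
`k` pegs has full reach. -/
noncomputable def OptPeggingNumber {V : Type*} (G : SimpleGraph V) [DecidableEq V] : ℕ :=
  sInf {k | 0 < k ∧ ∃ D : Finset V, D.card = k ∧ PegReach G D = Set.univ}

/-- Weight of a distribution with respect to a target vertex `t`,
with `σ = (√5 - 1)/2`. -/
noncomputable def pegWeight {V : Type*} (G : SimpleGraph V) (D : Finset V) (t : V) : ℝ :=
  ∑ u ∈ D, ((Real.sqrt 5 - 1) / 2) ^ (G.dist u t)

/-!
With `σ = (√5 - 1)/2` we have `σ² + σ = 1`. In a move `u, v ↦ w` the new peg is at most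
one step farther from `t` than `v`, which is at most one step farther than `u`; writing
`d = d(v, t)`, `σ^d(w,t) ≤ σ^(d-1) = σ^d + σ^(d+1) ≤ σ^d(v,t) + σ^d(u,t)`. So no move
increases the weight, while any distribution containing `t` has weight at least `σ^0 = 1`.
-/

section GoldenPowers

variable {R : Type*} [CommRing R] [LinearOrder R] [IsStrictOrderedRing R]

theorem pow_le_pow_add_pow_of_sq_add_eq_one {σ : R} (hσ₀ : 0 ≤ σ) (hσ : σ ^ 2 + σ = 1)
    {a b c : ℕ} (hbc : b ≤ c + 1) (hab : a ≤ b + 1) : σ ^ c ≤ σ ^ a + σ ^ b := by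
  have hσ₁ : σ ≤ 1 := by nlinarith
  obtain _ | k := b
  · have := pow_nonneg hσ₀ a
    have := pow_le_one₀ hσ₀ hσ₁ (n := c)
    rw [pow_zero]
    linarith
  · calc σ ^ c ≤ σ ^ k := pow_le_pow_of_le_one hσ₀ hσ₁ (by omega)
      _ = σ ^ (k + 2) + σ ^ (k + 1) := by linear_combination (-σ ^ k) * hσ
      _ ≤ σ ^ a + σ ^ (k + 1) := by grw [pow_le_pow_of_le_one hσ₀ hσ₁ hab]

end GoldenPowers

theorem SimpleGraph.Adj.dist_le_dist_add_one {V : Type*} {G : SimpleGraph V} {x y : V}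
    (h : G.Adj x y) (t : V) : G.dist x t ≤ G.dist y t + 1 := by
  have := h.reachable.dist_triangle_left t
  rw [dist_eq_one_iff_adj.mpr h] at this
  omega

theorem sqrt_five_sub_one_div_two_nonneg : (0 : ℝ) ≤ (Real.sqrt 5 - 1) / 2 := by
  have : (1 : ℝ) ≤ Real.sqrt 5 := Real.one_le_sqrt.mpr (by norm_num)
  linarith

theorem sqrt_five_sub_one_div_two_sq_add_self :
    ((Real.sqrt 5 - 1) / 2) ^ 2 + (Real.sqrt 5 - 1) / 2 = 1 := by
  linear_combination (1 / 4 : ℝ) * Real.sq_sqrt (show (0 : ℝ) ≤ 5 by norm_num)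

section PegWeight

variable {V : Type*} (G : SimpleGraph V)

theorem one_le_pegWeight_of_mem {D : Finset V} {t : V} (ht : t ∈ D) : 1 ≤ pegWeight G D t := by
  calc (1 : ℝ) = ((Real.sqrt 5 - 1) / 2) ^ G.dist t t := by rw [dist_self, pow_zero]
    _ ≤ pegWeight G D t :=
      single_le_sum (f := fun u ↦ ((Real.sqrt 5 - 1) / 2) ^ G.dist u t)
        (fun _ _ ↦ pow_nonneg sqrt_five_sub_one_div_two_nonneg _) ht

variable [DecidableEq V]

theorem pegWeight_le_of_pegMove {D D' : Finset V} (hm : PegMove G D D') (t : V) :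
    pegWeight G D' t ≤ pegWeight G D t := by
  obtain ⟨u, v, w, huv, hvw, hu, hv, hw, rfl⟩ := hm
  have hvu : v ∈ D.erase u := mem_erase.mpr ⟨huv.ne.symm, hv⟩
  have hw' : w ∉ (D.erase u).erase v := fun h ↦ hw (mem_of_mem_erase (mem_of_mem_erase h))
  have hmove := pow_le_pow_add_pow_of_sq_add_eq_one sqrt_five_sub_one_div_two_nonneg
    sqrt_five_sub_one_div_two_sq_add_self
    (hvw.dist_le_dist_add_one t) (huv.dist_le_dist_add_one t)
  rw [pegWeight, pegWeight, sum_insert hw', ← add_sum_erase D _ hu, ← add_sum_erase _ _ hvu]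
  linarith

theorem pegWeight_le_of_reflTransGen {D D' : Finset V}
    (hD : Relation.ReflTransGen (PegMove G) D D') (t : V) :
    pegWeight G D' t ≤ pegWeight G D t := by
  induction hD with
  | refl => rfl
  | tail _ hm ih => exact (pegWeight_le_of_pegMove G hm t).trans ih

end PegWeight

theorem not_reachable_of_pegWeight_lt_one {V : Type*} (G : SimpleGraph V) [DecidableEq V]
    (D : Finset V) (t : V) (h : pegWeight G D t < 1) :
    t ∉ PegReach G D := by
  rintro ⟨D', hD', ht⟩
  exact (one_le_pegWeight_of_mem G ht).not_gt ((pegWeight_le_of_reflTransGen G hD' t).trans_lt h)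
end

section
/- For n ≥ 4, the pegging number of the path P_n on n vertices is n − 1. -/
open SimpleGraph Finset

variable {V : Type*} {W : Type*}

/-!
With `n - 1` pegs only one vertex `t` is empty, and for `n ≥ 4` some pegged path `u - v - t`
fills it in one move. Conversely, give vertex `0` weight `0` and vertex `i ≥ 1` weight
`fib (n - 1 - i)`: no move increases the total weight (a leftward jump is exactly the Fibonacci
recursion), and pegs avoiding vertices `1` and `2` weigh at most
`fib 0 + ⋯ + fib (n - 4) = fib (n - 2) - 1`, less than the weight `fib (n - 2)` of vertex `1`.
So `n - 2` such pegs never reach vertex `1`.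
-/

section

variable [DecidableEq V] {G : SimpleGraph V}

theorem peggingNumber_eq_of_forall_card_eq {k : ℕ} (hk : 0 < k)
    (hfull : ∀ D : Finset V, D.card = k → PegReach G D = Set.univ)
    (hpartial : ∀ j, 0 < j → j < k → ∃ D : Finset V, D.card = j ∧ PegReach G D ≠ Set.univ) :
    PeggingNumber G = k := by
  refine le_antisymm (Nat.sInf_le ⟨hk, hfull⟩) (le_csInf ⟨k, hk, hfull⟩ ?_)
  rintro j ⟨hj, hjfull⟩
  by_contra! hjk
  obtain ⟨D, hD, hne⟩ := hpartial j hj hjk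
  exact hne (hjfull D hD)

theorem mem_pegReach_of_adj {D : Finset V} {u v t : V} (huv : G.Adj u v) (hvt : G.Adj v t)
    (hu : u ∈ D) (hv : v ∈ D) (ht : t ∉ D) : t ∈ PegReach G D :=
  ⟨_, .single ⟨u, v, t, huv, hvt, hu, hv, ht, rfl⟩, mem_insert_self _ _⟩

theorem pegReach_eq_univ_of_card_eq_sub_one [Fintype V]
    (hG : ∀ t : V, ∃ u v, G.Adj u v ∧ G.Adj v t ∧ u ≠ t) {D : Finset V}
    (hD : D.card = Fintype.card V - 1) : PegReach G D = Set.univ := by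
  refine Set.eq_univ_of_forall fun t => ?_
  by_cases ht : t ∈ D
  · exact ⟨D, .refl, ht⟩
  have hins : insert t D = univ := by
    refine eq_univ_of_card _ ?_
    have : 0 < Fintype.card V := Fintype.card_pos_iff.2 ⟨t⟩
    rw [card_insert_of_notMem ht, hD]
    omega
  have hmem : ∀ s, s ≠ t → s ∈ D := fun s hs =>
    (mem_insert.1 (hins ▸ mem_univ s)).resolve_left hs
  obtain ⟨u, v, huv, hvt, hut⟩ := hG t
  exact mem_pegReach_of_adj huv hvt (hmem u hut) (hmem v hvt.ne) ht

/-- Conway's pagoda condition: no single pegging move increases the total weight. -/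
def IsPagoda {M : Type*} [Add M] [LE M] (G : SimpleGraph V) (f : V → M) : Prop :=
  ∀ u v w, G.Adj u v → G.Adj v w → u ≠ w → f w ≤ f u + f v

variable {M : Type*} [AddCommMonoid M] [PartialOrder M] [IsOrderedAddMonoid M] {f : V → M}

theorem IsPagoda.sum_le_of_reflTransGen (hf : IsPagoda G f) {D D' : Finset V}
    (h : Relation.ReflTransGen (PegMove G) D D') : ∑ i ∈ D', f i ≤ ∑ i ∈ D, f i := by
  induction h with
  | refl => exact le_rfl
  | @tail B _ _ hmove ih =>
    refine le_trans ?_ ih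
    obtain ⟨u, v, w, huv, hvw, hu, hv, hw, rfl⟩ := hmove
    have hwD : w ∉ (B.erase u).erase v := fun h =>
      hw (mem_of_mem_erase (mem_of_mem_erase h))
    rw [sum_insert hwD, ← add_sum_erase _ _ hu,
      ← add_sum_erase _ _ (mem_erase.2 ⟨huv.ne', hv⟩), ← add_assoc]
    exact add_le_add_left (hf u v w huv hvw (ne_of_mem_of_not_mem hu hw)) _

theorem IsPagoda.notMem_pegReach (hf : IsPagoda G f) (hf0 : 0 ≤ f) {D : Finset V} {t : V}
    (ht : ∑ i ∈ D, f i < f t) : t ∉ PegReach G D := by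
  rintro ⟨D', hDD', htD'⟩
  exact (single_le_sum (fun i _ => hf0 i) htD' |>.trans (hf.sum_le_of_reflTransGen hDD')
    |>.trans_lt ht).false

end

namespace SimpleGraph.pathGraph

variable {n : ℕ}

theorem exists_adj_adj_ne (hn : 4 ≤ n) (t : Fin n) :
    ∃ u v, (pathGraph n).Adj u v ∧ (pathGraph n).Adj v t ∧ u ≠ t := by
  by_cases ht : t.val + 2 < n
  · exact ⟨⟨t + 2, ht⟩, ⟨t + 1, by omega⟩, by simp [pathGraph_adj], by simp [pathGraph_adj],
      by simp [Fin.ext_iff]⟩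
  · exact ⟨⟨t - 2, by omega⟩, ⟨t - 1, by omega⟩, by simp [pathGraph_adj]; omega,
      by simp [pathGraph_adj]; omega, by simp [Fin.ext_iff]; omega⟩

def fibWeight (n : ℕ) (i : Fin n) : ℕ := if i.val = 0 then 0 else Nat.fib (n - 1 - i)

theorem isPagoda_fibWeight : IsPagoda (pathGraph n) (fibWeight n) := by
  intro u v w huv hvw huw
  rw [pathGraph_adj] at huv hvw
  rw [Ne, Fin.ext_iff] at huw
  unfold fibWeight
  rcases huv with huv | huv <;> rcases hvw with hvw | hvw
  · rw [if_neg (show w.val ≠ 0 by omega), if_neg (show v.val ≠ 0 by omega)]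
    exact le_add_left (Nat.fib_mono (by omega))
  · omega
  · omega
  · by_cases hw : w.val = 0
    · rw [if_pos hw]
      exact Nat.zero_le _
    · obtain ⟨m, hm⟩ : ∃ m, n - 1 - w = m + 2 := ⟨n - 1 - u, by omega⟩
      rw [if_neg hw, if_neg (show u.val ≠ 0 by omega), if_neg (show v.val ≠ 0 by omega), hm,
        Nat.fib_add_two, show n - 1 - u = m by omega, show n - 1 - v = m + 1 by omega]

theorem sum_fibWeight_lt (hn : 3 ≤ n) {D : Finset (Fin n)}
    (hD : ∀ i ∈ D, i.val ≠ 1 ∧ i.val ≠ 2) :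
    ∑ i ∈ D, fibWeight n i < fibWeight n ⟨1, by omega⟩ := by
  set D₀ := D.filter (fun i => i.val ≠ 0)
  have hmaps : ∀ i ∈ D₀, n - 1 - i < n - 3 := fun i hi => by
    obtain ⟨hiD, hi0⟩ := mem_filter.1 hi
    have := hD i hiD
    omega
  have hinj : Set.InjOn (fun i : Fin n => n - 1 - i) D₀ := fun i _ j _ hij => by
    simp only at hij
    omega
  calc ∑ i ∈ D, fibWeight n i = ∑ i ∈ D₀, Nat.fib (n - 1 - i) := by
        rw [sum_filter]
        exact sum_congr rfl fun i _ => by unfold fibWeight; split_ifs <;> first | rfl | omega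
    _ = ∑ j ∈ D₀.image (fun i : Fin n => n - 1 - i), Nat.fib j := (sum_image hinj).symm
    _ ≤ ∑ j ∈ range (n - 3), Nat.fib j :=
        sum_le_sum_of_subset (image_subset_iff.2 fun i hi => mem_range.2 (hmaps i hi))
    _ < Nat.fib (n - 3 + 1) := by rw [Nat.fib_succ_eq_succ_sum]; omega
    _ = fibWeight n ⟨1, by omega⟩ := by
        rw [fibWeight, if_neg one_ne_zero, Fin.val_mk]; congr 1; omega

theorem exists_card_eq_pegReach_ne_univ (hn : 3 ≤ n) {k : ℕ} (hk : k ≤ n - 2) :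
    ∃ D : Finset (Fin n), D.card = k ∧ PegReach (pathGraph n) D ≠ Set.univ := by
  let S := (univ.erase (⟨1, by omega⟩ : Fin n)).erase ⟨2, by omega⟩
  have hS : S.card = n - 2 := by
    rw [card_erase_of_mem (by simp), card_erase_of_mem (mem_univ _), card_univ,
      Fintype.card_fin]
    omega
  obtain ⟨D, hDS, hDk⟩ := exists_subset_card_eq (hS ▸ hk : k ≤ S.card)
  refine ⟨D, hDk, fun hfull => ?_⟩
  have hD : ∀ i ∈ D, i.val ≠ 1 ∧ i.val ≠ 2 := fun i hi => by
    have := hDS hi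
    simp only [S, mem_erase, Ne, Fin.ext_iff] at this
    exact ⟨this.2.1, this.1⟩
  exact isPagoda_fibWeight.notMem_pegReach (fun _ => Nat.zero_le _) (sum_fibWeight_lt hn hD)
    (hfull ▸ Set.mem_univ _)

end SimpleGraph.pathGraph

theorem peggingNumber_pathGraph (n : ℕ) (hn : 4 ≤ n) :
    PeggingNumber (SimpleGraph.pathGraph n) = n - 1 := by
  refine peggingNumber_eq_of_forall_card_eq (by omega) (fun D hD => ?_) (fun k _ hk => ?_)
  · exact pegReach_eq_univ_of_card_eq_sub_one (pathGraph.exists_adj_adj_ne hn)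
      (by rwa [Fintype.card_fin])
  · exact pathGraph.exists_card_eq_pegReach_ne_univ (by omega) (by omega)
end
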